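/- Let L be a plan library for a goal G and N a positive integer, and let P_L^N(G) be its STRIPS compilation. In every state s reachable from the initial state I_L = {top(0)} by applying actions of P_L^N(G), exactly one of the fluents top(0),…,top(N) is true. -/

import Mathlib

/-- Kinds of nodes of a plan library: AND nodes, OR nodes, and leaves
(primitive actions). -/
inductive NodeKind where
  | andNode
  | orNode
  | leaf
deriving DecidableEq

/-- A plan library for a goal: a rooted AND/OR graph (possibly cyclic) over
nodes `ν`, with primitive actions labelled by `α`.  The root is an OR node;
children of OR nodes are AND nodes or leaves, children of AND nodes are OR
nodes or leaves, and the children of each AND node `n` are partially ordered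
by `ord n`. -/
structure PlanLibrary (ν α : Type) where
  root : ν
  kind : ν → NodeKind
  children : ν → Set ν
  /-- `ord n n' n''` means child `n'` of `n` must come before child `n''`. -/
  ord : ν → ν → ν → Prop
  /-- the primitive action carried by a leaf node -/
  label : ν → α
  root_or : kind root = NodeKind.orNode
  or_children : ∀ n, kind n = NodeKind.orNode →
    ∀ n' ∈ children n, kind n' = NodeKind.andNode ∨ kind n' = NodeKind.leaf
  and_children : ∀ n, kind n = NodeKind.andNode →
    ∀ n' ∈ children n, kind n' = NodeKind.orNode ∨ kind n' = NodeKind.leaf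
  leaf_children : ∀ n, kind n = NodeKind.leaf → children n = ∅
  ord_irrefl : ∀ n n', ¬ ord n n' n'
  ord_trans : ∀ n a b c, ord n a b → ord n b c → ord n a c

/-- Fluents of the compiled problem `P_L^N(G)`: `top i`, `started n i`,
`finished n i` for nodes `n` and stack levels `i`. -/
inductive LFluent (ν : Type) where
  | top (i : ℕ)
  | started (n : ν) (i : ℕ)
  | finished (n : ν) (i : ℕ)
deriving DecidableEq

/-- Actions of the compiled problem: `start n n' i` (a call from node `n` to
its child `n'` at level `i`), `endAnd n i` (termination of the calls made
from AND node `n`), and `endOr n n' i` (termination of the call from OR node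
`n` to its child `n'`). -/
inductive LAct (ν : Type) where
  | start (n n' : ν) (i : ℕ)
  | endAnd (n : ν) (i : ℕ)
  | endOr (n n' : ν) (i : ℕ)
deriving DecidableEq

/-- A STRIPS problem with negative preconditions: a set `acts` of available
actions, an initial state, and positive preconditions, negative
preconditions, add and delete lists for each action. -/
structure StripsNeg (F A : Type) where
  acts : Set A
  I : Set F
  pre : A → Set F
  npre : A → Set F
  add : A → Set F
  del : A → Set F

namespace StripsNeg

variable {F A : Type}

/-- The result of applying action `a` in state `s`: `(s \ Del(a)) ∪ Add(a)`. -/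
def applyA (P : StripsNeg F A) (s : Set F) (a : A) : Set F := (s \ P.del a) ∪ P.add a

/-- `Exec P s π t`: the action sequence `π` consists of actions of `P`, is
applicable successively from state `s` (positive preconditions true, negative
preconditions false), and leads to state `t`. -/
inductive Exec (P : StripsNeg F A) : Set F → List A → Set F → Prop
  | nil (s : Set F) : Exec P s [] s
  | cons {s t : Set F} {a : A} {π : List A} :
      a ∈ P.acts → P.pre a ⊆ s → (∀ p ∈ P.npre a, p ∉ s) →
      Exec P (P.applyA s a) π t → Exec P s (a :: π) t

/-- `π` is a plan for goal `G` in `P`. -/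
def IsPlan (P : StripsNeg F A) (G : Set F) (π : List A) : Prop :=
  ∃ t, Exec P P.I π t ∧ G ⊆ t

/-- A state reachable from the initial state by applying actions of `P`. -/
def Reachable (P : StripsNeg F A) (s : Set F) : Prop :=
  ∃ π, Exec P P.I π s

/-- The cost of a plan: the sum of the costs of its actions. -/
def planCost (c : A → ℝ) (π : List A) : ℝ := (π.map c).sum

/-- An optimal plan for `G`: a plan for `G` of minimum cost among all plans
for `G`. -/
def IsOptimalPlan (P : StripsNeg F A) (c : A → ℝ) (G : Set F) (π : List A) : Prop :=
  P.IsPlan G π ∧ ∀ π', P.IsPlan G π' → planCost c π ≤ planCost c π'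

end StripsNeg

open NodeKind in
/-- The compilation `P_L^N(G)` of a plan library `L` with depth parameter `N`
into a STRIPS problem with negative preconditions.  Initial state `{top 0}`;
the goal is `{finished root 0}`.  (Levels range over `0,…,N`: calls that push
the stack are only available for `i < N`.)  The constant `i - 1` is truncated
subtraction, so the action `endOr root n' 0` adds `finished root 0` as the
special root rule prescribes. -/
def PlanLibrary.compile {ν α : Type} (L : PlanLibrary ν α) (N : ℕ) :
    StripsNeg (LFluent ν) (LAct ν) where
  acts := { a | match a with
    | .start n n' i =>
        n' ∈ L.children n ∧
        ((L.kind n = andNode ∧ L.kind n' = leaf ∧ i ≤ N) ∨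
         (L.kind n = andNode ∧ L.kind n' ≠ leaf ∧ i < N) ∨
         (L.kind n = orNode ∧ i < N))
    | .endAnd n i => L.kind n = andNode ∧ 1 ≤ i ∧ i ≤ N
    | .endOr n n' i =>
        L.kind n = orNode ∧ n' ∈ L.children n ∧ i ≤ N ∧ (1 ≤ i ∨ n = L.root) }
  I := {LFluent.top 0}
  pre := fun a => match a with
    | .start n n' i =>
        if L.kind n = andNode then
          {LFluent.top i, LFluent.started n i} ∪
            {p | ∃ n'', L.ord n n'' n' ∧ p = LFluent.finished n'' i}
        else
          {LFluent.top i, LFluent.started n i}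
    | .endAnd n i =>
        {LFluent.top i, LFluent.started n i} ∪
          {p | ∃ n' ∈ L.children n, p = LFluent.finished n' i}
    | .endOr n n' i => {LFluent.top i, LFluent.started n i, LFluent.finished n' i}
  npre := fun a => match a with
    | .start n n' i =>
        if L.kind n = andNode then
          insert (LFluent.finished n' (i + 1))
            {p | ∃ n'' ∈ L.children n, p = LFluent.started n'' i}
        else
          {p | ∃ n'' ∈ L.children n,
            p = LFluent.finished n'' (i + 1) ∨ p = LFluent.started n'' (i + 1)}
    | .endAnd _ _ => ∅
    | .endOr _ _ _ => ∅
  add := fun a => match a with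
    | .start n n' i =>
        if L.kind n = andNode ∧ L.kind n' = leaf then
          {LFluent.finished n' i}
        else
          {LFluent.top (i + 1), LFluent.started n' (i + 1)}
    | .endAnd n i => {LFluent.finished n (i - 1), LFluent.top (i - 1)}
    | .endOr n _ i => {LFluent.finished n (i - 1), LFluent.top (i - 1)}
  del := fun a => match a with
    | .start n n' i =>
        if L.kind n = andNode ∧ L.kind n' = leaf then
          (∅ : Set (LFluent ν))
        else
          {LFluent.top i}
    | .endAnd n i =>
        {LFluent.top i, LFluent.started n i} ∪
          {p | ∃ n' ∈ L.children n, p = LFluent.finished n' i}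
    | .endOr n n' i => {LFluent.top i, LFluent.started n i, LFluent.finished n' i}

/-!
The fluents `top i` record the height of a call stack. Every action has `top` at its own level
among its preconditions and either keeps it (executing a leaf), or deletes it and adds `top` at
one new level (a call pushes, an end pops); the action guards keep that level within `0, …, N`.
Hence the set of true `top` fluents stays a singleton.
-/

namespace StripsNeg

variable {F A : Type}

theorem Exec.invariant {P : StripsNeg F A} {Q : Set F → Prop}
    (hstep : ∀ s a, a ∈ P.acts → P.pre a ⊆ s → Q s → Q (P.applyA s a))
    {s t : Set F} {π : List A} (h : P.Exec s π t) (hs : Q s) : Q t := by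
  induction h with
  | nil => exact hs
  | cons ha hpre _ _ ih => exact ih (hstep _ _ ha hpre hs)

theorem Reachable.invariant {P : StripsNeg F A} {Q : Set F → Prop}
    (hI : Q P.I) (hstep : ∀ s a, a ∈ P.acts → P.pre a ⊆ s → Q s → Q (P.applyA s a))
    {s : Set F} (hs : P.Reachable s) : Q s :=
  hs.elim fun _ h => h.invariant hstep hI

end StripsNeg

namespace LAct

variable {ν : Type}

def level : LAct ν → ℕ
  | start _ _ i | endAnd _ i | endOr _ _ i => i

end LAct

namespace PlanLibrary

open NodeKind

variable {ν α : Type} (L : PlanLibrary ν α) (N : ℕ)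

def nextLevel : LAct ν → ℕ
  | .start n n' i => if L.kind n = andNode ∧ L.kind n' = leaf then i else i + 1
  | .endAnd _ i | .endOr _ _ i => i - 1

theorem top_level_mem_pre (a : LAct ν) : LFluent.top a.level ∈ (L.compile N).pre a := by
  cases a with
  | start n n' i => by_cases h : L.kind n = andNode <;> simp [compile, LAct.level, h]
  | endAnd n i | endOr n n' i => simp [compile, LAct.level]

theorem nextLevel_le {a : LAct ν} (ha : a ∈ (L.compile N).acts) : L.nextLevel a ≤ N := by
  cases a <;> simp only [compile, Set.mem_ofPred_eq] at ha <;> grind [nextLevel]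

theorem top_mem_applyA_iff {s : Set (LFluent ν)} {a : LAct ν} (hs : LFluent.top a.level ∈ s)
    (j : ℕ) :
    LFluent.top j ∈ (L.compile N).applyA s a ↔
      j = L.nextLevel a ∨ (LFluent.top j ∈ s ∧ j ≠ a.level) := by
  cases a with
  | start n n' i =>
    simp only [LAct.level] at hs
    by_cases h : L.kind n = andNode ∧ L.kind n' = leaf
    · simp only [StripsNeg.applyA, compile, h, and_self, ↓reduceIte, Set.sdiff_empty,
        Set.union_singleton, Set.mem_insert_iff, reduceCtorEq, false_or, nextLevel, LAct.level]
      grind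
    · simp [StripsNeg.applyA, compile, nextLevel, LAct.level, h]
  | endAnd n i | endOr n n' i => simp [StripsNeg.applyA, compile, nextLevel, LAct.level]

theorem exists_top_iff_applyA {s : Set (LFluent ν)} {a : LAct ν}
    (ha : a ∈ (L.compile N).acts) (hpre : (L.compile N).pre a ⊆ s)
    (hs : ∃ k ≤ N, ∀ j, LFluent.top j ∈ s ↔ j = k) :
    ∃ k ≤ N, ∀ j, LFluent.top j ∈ (L.compile N).applyA s a ↔ j = k := by
  obtain ⟨k, -, hk⟩ := hs
  have hlevel : LFluent.top a.level ∈ s := hpre (L.top_level_mem_pre N a)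
  have hak : a.level = k := (hk _).1 hlevel
  refine ⟨L.nextLevel a, L.nextLevel_le N ha, fun j => ?_⟩
  rw [L.top_mem_applyA_iff N hlevel, hk, hak]
  tauto

theorem exists_top_iff_of_reachable {s : Set (LFluent ν)} (hs : (L.compile N).Reachable s) :
    ∃ k ≤ N, ∀ j, LFluent.top j ∈ s ↔ j = k :=
  hs.invariant ⟨0, N.zero_le, by simp [compile]⟩ fun _ _ ha hpre =>
    L.exists_top_iff_applyA N ha hpre

end PlanLibrary

theorem compile_exactly_one_top_general
    {ν α : Type} (L : PlanLibrary ν α) (N : ℕ)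
    (s : Set (LFluent ν)) (hs : (L.compile N).Reachable s) :
    ∃! i : ℕ, i ≤ N ∧ LFluent.top i ∈ s := by
  obtain ⟨k, hkN, hk⟩ := L.exists_top_iff_of_reachable N hs
  exact ⟨k, ⟨hkN, (hk k).2 rfl⟩, fun j hj => (hk j).1 hj.2⟩

/-- let `L` be a plan library for a goal `G`, `N` a positive
integer, and `P_L^N(G) = L.compile N` its STRIPS compilation.  In every state
`s` reachable from the initial state `I_L = {top 0}` by applying actions of
`P_L^N(G)`, exactly one of the fluents `top 0, …, top N` is true. -/
theorem compile_exactly_one_top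
    {ν α : Type} (L : PlanLibrary ν α) (N : ℕ) (hN : 0 < N)
    (s : Set (LFluent ν)) (hs : (L.compile N).Reachable s) :
    ∃! i : ℕ, i ≤ N ∧ LFluent.top i ∈ s :=
  compile_exactly_one_top_general L N s hs
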